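/- Boosted e-BH preserves FDR: if (e_{j,i}) are nonnegative random variables satisfying the compound condition Σ E[e_{j,i} 1{H_{j,i} true}] ≤ n (with n the total number of hypotheses), and U ~ Unif(0,1) is independent of everything, then the e-BH procedure applied to the boosted values e_{j,i}^U = e_{j,i}/U at level α controls FDR ≤ α. -/

import Mathlib

open MeasureTheory ProbabilityTheory Finset
open scoped ENNReal Classical

noncomputable section

def kstar {ι : Type*} (S : Finset ι) (α : ℝ) (e : ι → ℝ) : ℕ :=
  sSup {k | k ≤ S.card ∧ k ≤ (S.filter (fun j => (S.card : ℝ) ≤ α * k * e j)).card}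

def eBHreject {ι : Type*} (S : Finset ι) (α : ℝ) (e : ι → ℝ) : Finset ι :=
  S.filter (fun j => (S.card : ℝ) ≤ α * (kstar S α e) * e j)

/-!
If e-BH applied to the boosted values `e j / u` makes `K(u) ≥ 1` rejections (counting no
rejection as one), every rejected `j` has `u ≤ c j * K(u)` with `c j = α e j / n`, so the FDP
is at most `∑_{j null} 1{u ≤ c j K(u)} / K(u)`. A smaller `u` boosts more, so `K` is antitone,
and then `{u ∈ (0,1) | u ≤ c K(u)}` lies in `(0, t]` for its supremum `t`, where `1 / K ≤ c / t`;
hence `∫₀¹ 1{u ≤ c K(u)} / K(u) du ≤ c`. Integrating over the independent uniform `U` first and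
the e-values second bounds the FDR by `(α / n) ∑_{j null} E[e j] ≤ α`, by the compound condition.
-/

section eBH

variable {ι : Type*} {S : Finset ι} {α : ℝ} {e e' : ι → ℝ}

def eBHcount (S : Finset ι) (α : ℝ) (k : ℕ) (e : ι → ℝ) : ℕ :=
  (S.filter fun j => (S.card : ℝ) ≤ α * k * e j).card

lemma le_kstar_of_le_eBHcount {k : ℕ} (hS : k ≤ S.card) (hk : k ≤ eBHcount S α k e) :
    k ≤ kstar S α e :=
  le_csSup ⟨S.card, fun _ hm => hm.1⟩ ⟨hS, hk⟩

lemma kstar_le_card_and_le_eBHcount :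
    kstar S α e ≤ S.card ∧ kstar S α e ≤ eBHcount S α (kstar S α e) e :=
  Nat.sSup_mem (s := {k | k ≤ S.card ∧ k ≤ eBHcount S α k e}) ⟨0, by simp⟩
    ⟨S.card, fun _ hm => hm.1⟩

lemma kstar_le_card_eBHreject : kstar S α e ≤ (eBHreject S α e).card :=
  kstar_le_card_and_le_eBHcount.2

lemma eBHcount_mono (hα : 0 ≤ α) (k : ℕ) (h : e ≤ e') :
    eBHcount S α k e ≤ eBHcount S α k e' :=
  card_le_card <| monotone_filter_right _ fun j _ hj =>
    hj.trans <| mul_le_mul_of_nonneg_left (h j) (by positivity)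

lemma kstar_le_kstar (hα : 0 ≤ α) (h : e ≤ e') : kstar S α e ≤ kstar S α e' :=
  le_kstar_of_le_eBHcount kstar_le_card_and_le_eBHcount.1
    (kstar_le_card_and_le_eBHcount.2.trans (eBHcount_mono hα _ h))

lemma eBHreject_mono (hα : 0 ≤ α) (he : 0 ≤ e) (h : e ≤ e') :
    eBHreject S α e ⊆ eBHreject S α e' :=
  monotone_filter_right _ fun j _ hj =>
    hj.trans <| mul_le_mul
      (mul_le_mul_of_nonneg_left (by exact_mod_cast kstar_le_kstar hα h) hα) (h j) (he j)
      (by positivity)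

lemma kstar_eq_sup' : kstar S α e = (range (S.card + 1)).sup' nonempty_range_add_one
    fun k => if k ≤ eBHcount S α k e then k else 0 := by
  refine le_antisymm ?_ (sup'_le _ _ fun k hk => ?_)
  · obtain ⟨hS, hk⟩ := kstar_le_card_and_le_eBHcount (S := S) (α := α) (e := e)
    exact le_trans (by rw [if_pos hk]) (le_sup' _ (mem_range_succ_iff.2 hS))
  · split_ifs with h
    · exact le_kstar_of_le_eBHcount (mem_range_succ_iff.1 hk) h
    · exact Nat.zero_le _

end eBH

section FDP

variable {ι : Type*} {S : Finset ι} {α : ℝ} {H : ι → Prop} {e : ι → ℝ}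

def eBHdenom (S : Finset ι) (α : ℝ) (e : ι → ℝ) : ℝ :=
  ((max (eBHreject S α e).card 1 : ℕ) : ℝ)

/-- The false discovery proportion of e-BH: `H j` marks the true null hypotheses. -/
def eBHfdp (S : Finset ι) (α : ℝ) (H : ι → Prop) (e : ι → ℝ) : ℝ :=
  ((eBHreject S α e).filter H).card / eBHdenom S α e

lemma card_le_mul_of_mem_eBHreject (hα : 0 ≤ α) {j : ι} (hj : j ∈ eBHreject S α e)
    (hej : 0 ≤ e j) : (S.card : ℝ) ≤ α * eBHdenom S α e * e j := by
  refine (mem_filter.1 hj).2.trans (mul_le_mul_of_nonneg_right ?_ hej)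
  have hk : (kstar S α e : ℝ) ≤ eBHdenom S α e := by
    unfold eBHdenom; exact_mod_cast kstar_le_card_eBHreject.trans (le_max_left _ 1)
  exact mul_le_mul_of_nonneg_left hk hα

lemma one_le_eBHdenom : 1 ≤ eBHdenom S α e := by
  unfold eBHdenom; exact_mod_cast le_max_right _ _

lemma eBHfdp_nonneg : 0 ≤ eBHfdp S α H e := by unfold eBHfdp eBHdenom; positivity

lemma eBHfdp_le_one : eBHfdp S α H e ≤ 1 :=
  div_le_one_of_le₀
    (by unfold eBHdenom; exact_mod_cast (card_filter_le _ _).trans (le_max_left _ 1))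
    (zero_le_one.trans one_le_eBHdenom)

lemma eBHfdp_le_sum (hα : 0 ≤ α) (he : 0 ≤ e) :
    eBHfdp S α H e ≤ ∑ j ∈ S.filter H,
      if (S.card : ℝ) ≤ α * eBHdenom S α e * e j then (eBHdenom S α e)⁻¹ else 0 := by
  have hK : 0 ≤ (eBHdenom S α e)⁻¹ := inv_nonneg.2 (zero_le_one.trans one_le_eBHdenom)
  calc eBHfdp S α H e = ∑ j ∈ (eBHreject S α e).filter H, (eBHdenom S α e)⁻¹ := by
        rw [sum_const, nsmul_eq_mul, eBHfdp, div_eq_mul_inv]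
    _ = ∑ j ∈ (eBHreject S α e).filter H,
          if (S.card : ℝ) ≤ α * eBHdenom S α e * e j then (eBHdenom S α e)⁻¹ else 0 :=
        sum_congr rfl fun j hj =>
          (if_pos (card_le_mul_of_mem_eBHreject hα (mem_filter.1 hj).1 (he j))).symm
    _ ≤ _ := sum_le_sum_of_subset_of_nonneg (filter_subset_filter _ (filter_subset _ _))
        fun j _ _ => by split_ifs <;> simp [hK]

end FDP

section Measurability

variable {ι β : Type*} [MeasurableSpace β]

lemma measurable_card_filter (S : Finset ι) {p : ι → β → Prop}
    (hp : ∀ j ∈ S, MeasurableSet {b | p j b}) :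
    Measurable fun b => (S.filter (p · b)).card := by
  simp_rw [card_filter]
  exact Finset.measurable_sum _ fun j hj =>
    Measurable.ite (hp j hj) measurable_const measurable_const

variable (S : Finset ι) (α : ℝ)

lemma measurable_eBHcount (k : ℕ) : Measurable (eBHcount S α k) :=
  measurable_card_filter S fun j _ =>
    measurableSet_le measurable_const ((measurable_pi_apply j).const_mul _)

lemma measurable_kstar : Measurable (kstar S α) := by
  simp_rw [funext fun e => kstar_eq_sup' (S := S) (α := α) (e := e)]
  exact Finset.measurable_range_sup'' fun k _ => Measurable.ite
    (measurableSet_le measurable_const (measurable_eBHcount S α k)) measurable_const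
    measurable_const

lemma measurable_card_filter_eBHreject (H : ι → Prop) :
    Measurable fun e => ((eBHreject S α e).filter H).card := by
  simp_rw [eBHreject, filter_filter]
  have hkstar : Measurable fun e : ι → ℝ => (kstar S α e : ℝ) :=
    measurable_from_nat.comp (measurable_kstar S α)
  convert measurable_card_filter S
    (p := fun j e => (S.card : ℝ) ≤ α * kstar S α e * e j ∧ H j) fun j _ =>
      (measurableSet_le measurable_const ((hkstar.const_mul α).mul (measurable_pi_apply j))).inter
        (MeasurableSet.const (H j))

lemma measurable_eBHdenom : Measurable (eBHdenom S α) := by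
  have h := measurable_card_filter_eBHreject S α fun _ => True
  simp only [filter_true] at h
  exact measurable_from_nat.comp (h.max measurable_const)

lemma measurable_eBHfdp (H : ι → Prop) : Measurable (eBHfdp S α H) :=
  (measurable_from_nat.comp (measurable_card_filter_eBHreject S α H)).div
    (measurable_eBHdenom S α)

end Measurability

lemma setIntegral_ite_le_mul_inv_le_of_antitoneOn {K : ℝ → ℝ}
    (hK : AntitoneOn K (Set.Ioo 0 1)) {c : ℝ} (hc : 0 ≤ c) :
    ∫ u in Set.Ioo 0 1, (if u ≤ c * K u then (K u)⁻¹ else 0) ≤ c := by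
  by_cases hf : IntegrableOn (fun u => if u ≤ c * K u then (K u)⁻¹ else 0) (Set.Ioo 0 1)
  swap
  · rw [integral_undef hf]; exact hc
  set A := Set.Ioo 0 1 ∩ {u | u ≤ c * K u}
  set t := sSup A
  have hA : BddAbove A := ⟨1, fun x (hx : x ∈ A) => hx.1.2.le⟩
  have ht : 0 ≤ t := Real.sSup_nonneg fun x (hx : x ∈ A) => hx.1.1.le
  -- On `A`, the antitone `K` stays above `t / c`, so the integrand is at most `c / t` on `(0, t]`.
  have hbound : ∀ u ∈ Set.Ioo (0 : ℝ) 1,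
      (if u ≤ c * K u then (K u)⁻¹ else 0) ≤ (Set.Ioc 0 t).indicator (fun _ => c / t) u := by
    intro u hu
    split_ifs with h
    · have huA : u ∈ A := ⟨hu, h⟩
      have hut : u ≤ t := le_csSup hA huA
      have htK : t ≤ c * K u := csSup_le ⟨u, huA⟩ fun x hx => (le_total x u).elim
        (fun hxu => hxu.trans h)
        fun hux => hx.2.trans (mul_le_mul_of_nonneg_left (hK hu hx.1 hux) hc)
      have htpos : 0 < t := hu.1.trans_le hut
      have hKpos : 0 < K u := pos_of_mul_pos_right (htpos.trans_le htK) hc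
      rw [Set.indicator_of_mem (show u ∈ Set.Ioc 0 t from ⟨hu.1, hut⟩), inv_eq_one_div,
        div_le_div_iff₀ hKpos htpos]
      linarith
    · exact Set.indicator_nonneg (fun _ _ => div_nonneg hc ht) u
  have hg : Integrable ((Set.Ioc 0 t).indicator fun _ => c / t) :=
    (integrable_indicator_iff measurableSet_Ioc).2 (integrableOn_const measure_Ioc_lt_top.ne)
  calc ∫ u in Set.Ioo 0 1, (if u ≤ c * K u then (K u)⁻¹ else 0)
      ≤ ∫ u in Set.Ioo 0 1, (Set.Ioc 0 t).indicator (fun _ => c / t) u :=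
        setIntegral_mono_on hf hg.integrableOn measurableSet_Ioo hbound
    _ ≤ ∫ u, (Set.Ioc 0 t).indicator (fun _ => c / t) u :=
        setIntegral_le_integral hg
          (ae_of_all _ (Set.indicator_nonneg fun _ _ => div_nonneg hc ht))
    _ = t * (c / t) := by
        rw [integral_indicator_const _ measurableSet_Ioc, measureReal_def, Real.volume_Ioc,
          sub_zero, ENNReal.toReal_ofReal ht, smul_eq_mul]
    _ ≤ c := by
        rcases ht.eq_or_lt with h0 | hpos
        · simp [← h0, hc]
        · rw [mul_div_cancel₀ _ hpos.ne']

section Boosted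

variable {ι : Type*} {S : Finset ι} {α : ℝ} {H : ι → Prop} {v : ι → ℝ}

lemma antitoneOn_eBHdenom_div (hα : 0 ≤ α) (hv : 0 ≤ v) :
    AntitoneOn (fun u => eBHdenom S α fun j => v j / u) (Set.Ioi 0) := fun u hu u' hu' hle => by
  have hsub := eBHreject_mono (S := S) hα (fun j => div_nonneg (hv j) (le_of_lt hu'))
    fun j => div_le_div_of_nonneg_left (hv j) hu hle
  simp only [eBHdenom]
  exact_mod_cast max_le_max (card_le_card hsub) le_rfl

lemma eBHfdp_div_le_sum (hα : 0 ≤ α) (hv : 0 ≤ v) {u : ℝ} (hu : 0 < u) :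
    eBHfdp S α H (fun j => v j / u) ≤ ∑ j ∈ S.filter H,
      if u ≤ α * v j / S.card * eBHdenom S α (fun j => v j / u)
      then (eBHdenom S α fun j => v j / u)⁻¹ else 0 := by
  refine (eBHfdp_le_sum hα fun j => div_nonneg (hv j) hu.le).trans (sum_le_sum fun j hj => ?_)
  split_ifs with h h'
  · exact le_rfl
  · have hS : (0 : ℝ) < S.card := by exact_mod_cast card_pos.2 ⟨j, (mem_filter.1 hj).1⟩
    rw [← mul_div_assoc, le_div_iff₀ hu] at h
    rw [div_mul_eq_mul_div, le_div_iff₀ hS] at h'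
    linarith
  · exact inv_nonneg.2 (zero_le_one.trans one_le_eBHdenom)
  · exact le_rfl

lemma setIntegral_eBHfdp_div_le (hα : 0 ≤ α) (hv : 0 ≤ v) :
    ∫ u in Set.Ioo 0 1, eBHfdp S α H (fun j => v j / u) ≤
      α / S.card * ∑ j ∈ S.filter H, v j := by
  set K : ℝ → ℝ := fun u => eBHdenom S α fun j => v j / u
  have hK_meas : Measurable K := (measurable_eBHdenom S α).comp
    (measurable_pi_lambda _ fun j => measurable_const.div measurable_id)
  set g : ι → ℝ → ℝ := fun j u => if u ≤ α * v j / S.card * K u then (K u)⁻¹ else 0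
  have hg_int : ∀ j, IntegrableOn (g j) (Set.Ioo 0 1) := fun j =>
    Integrable.of_mem_Icc 0 1 (Measurable.ite (measurableSet_le measurable_id
      (hK_meas.const_mul _)) hK_meas.inv measurable_const).aemeasurable <| ae_of_all _ fun u => by
        have hK : 1 ≤ K u := one_le_eBHdenom
        simp only [g]
        split_ifs
        exacts [⟨inv_nonneg.2 (zero_le_one.trans hK), inv_le_one_of_one_le₀ hK⟩,
          ⟨le_rfl, zero_le_one⟩]
  have hfdp_int : IntegrableOn (fun u => eBHfdp S α H fun j => v j / u) (Set.Ioo 0 1) :=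
    Integrable.of_mem_Icc 0 1 ((measurable_eBHfdp S α H).comp (measurable_pi_lambda _
      fun j => measurable_const.div measurable_id)).aemeasurable
      (ae_of_all _ fun _ => ⟨eBHfdp_nonneg, eBHfdp_le_one⟩)
  calc ∫ u in Set.Ioo 0 1, eBHfdp S α H (fun j => v j / u)
      ≤ ∫ u in Set.Ioo 0 1, ∑ j ∈ S.filter H, g j u :=
        setIntegral_mono_on hfdp_int (integrable_finsetSum _ fun j _ => hg_int j)
          measurableSet_Ioo fun u hu => eBHfdp_div_le_sum hα hv hu.1
    _ = ∑ j ∈ S.filter H, ∫ u in Set.Ioo 0 1, g j u :=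
        integral_finsetSum _ fun j _ => hg_int j
    _ ≤ ∑ j ∈ S.filter H, α * v j / S.card := sum_le_sum fun j _ =>
        setIntegral_ite_le_mul_inv_le_of_antitoneOn
          ((antitoneOn_eBHdenom_div hα hv).mono Set.Ioo_subset_Ioi_self)
          (div_nonneg (mul_nonneg hα (hv j)) (Nat.cast_nonneg _))
    _ = α / S.card * ∑ j ∈ S.filter H, v j := by
        rw [mul_sum]; exact sum_congr rfl fun j _ => by ring

end Boosted

lemma ProbabilityTheory.IndepFun.integral_comp_eq_integral_integral {Ω β γ E : Type*}
    [MeasurableSpace Ω] [MeasurableSpace β] [MeasurableSpace γ]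
    [NormedAddCommGroup E] [NormedSpace ℝ E] {μ : Measure Ω} [IsFiniteMeasure μ]
    {U : Ω → β} {X : Ω → γ} (hU : Measurable U) (hX : Measurable X) (hUX : IndepFun U X μ)
    {F : β × γ → E}
    (hF : Integrable F ((μ.map U).prod (μ.map X))) :
    ∫ ω, F (U ω, X ω) ∂μ = ∫ ω, ∫ u, F (u, X ω) ∂(μ.map U) ∂μ := by
  have hmap := (indepFun_iff_map_prod_eq_prod_map_map hU.aemeasurable hX.aemeasurable).1 hUX
  rw [← integral_map (hU.prodMk hX).aemeasurable (hmap ▸ hF.aestronglyMeasurable), hmap,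
    integral_prod_symm F hF,
    integral_map hX.aemeasurable hF.integral_prod_right.aestronglyMeasurable]

/-- boosted e-BH (U-eBH) preserves FDR. If nonnegative `e_1,…,e_n`
satisfy the compound condition `Σ_j E[e_j 1{H_j}] ≤ n` and `U ∼ Unif(0,1)` is
independent of the e-values, then e-BH applied to the boosted values `e_j/U` at level
`α` controls the FDR at `α`. -/
theorem boosted_ebh_fdr_control {Ω : Type*} [MeasurableSpace Ω]
    (μ : Measure Ω) [IsProbabilityMeasure μ] (n : ℕ) (α : ℝ) (hα : 0 < α)
    (e : Fin n → Ω → ℝ) (truth : Fin n → Prop)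
    (hmeas : ∀ j, Measurable (e j)) (hint : ∀ j, Integrable (e j) μ)
    (hnn : ∀ j ω, 0 ≤ e j ω)
    (hcompound : ∑ j : Fin n, ∫ ω, e j ω * (if truth j then (1 : ℝ) else 0) ∂μ ≤ n)
    (U : Ω → ℝ) (hU : Measurable U)
    (hUnif : Measure.map U μ = (volume : Measure ℝ).restrict (Set.Ioo 0 1))
    (hindep : IndepFun U (fun ω => fun j : Fin n => e j ω) μ) :
    ∫ ω, (((eBHreject (Finset.univ : Finset (Fin n)) α fun j => e j ω / U ω).filter
            (fun j => truth j)).card : ℝ)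
        / ((max (eBHreject (Finset.univ : Finset (Fin n)) α fun j => e j ω / U ω).card 1 : ℕ) : ℝ) ∂μ
      ≤ α := by
  set X : Ω → Fin n → ℝ := fun ω j => e j ω
  set F : ℝ × (Fin n → ℝ) → ℝ := fun p => eBHfdp univ α truth fun j => p.2 j / p.1
  have hF : Integrable F ((μ.map U).prod (μ.map X)) :=
    Integrable.of_mem_Icc 0 1 ((measurable_eBHfdp _ α truth).comp (measurable_pi_lambda _
      fun j => ((measurable_pi_apply j).comp measurable_snd).div measurable_fst)).aemeasurable
      (ae_of_all _ fun _ => ⟨eBHfdp_nonneg, eBHfdp_le_one⟩)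
  have hsum_int : Integrable (fun ω => α / n * ∑ j ∈ univ.filter truth, e j ω) μ :=
    (integrable_finsetSum _ fun j _ => hint j).const_mul _
  calc ∫ ω, F (U ω, X ω) ∂μ
      = ∫ ω, (∫ u in Set.Ioo (0 : ℝ) 1, F (u, X ω)) ∂μ := by
        rw [hindep.integral_comp_eq_integral_integral hU (measurable_pi_lambda _ hmeas) hF, hUnif]
    _ ≤ ∫ ω, α / n * ∑ j ∈ univ.filter truth, e j ω ∂μ :=
        integral_mono_of_nonneg (ae_of_all _ fun ω => setIntegral_nonneg measurableSet_Ioo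
          fun _ _ => eBHfdp_nonneg) hsum_int (ae_of_all _ fun ω => by
            have := setIntegral_eBHfdp_div_le (S := univ) (H := truth) hα.le fun j => hnn j ω
            rwa [card_univ, Fintype.card_fin] at this)
    _ = α / n * ∑ j : Fin n, ∫ ω, e j ω * (if truth j then (1 : ℝ) else 0) ∂μ := by
        rw [integral_const_mul, integral_finsetSum _ fun j _ => hint j, sum_filter]
        congr 1
        exact sum_congr rfl fun j _ => by split_ifs <;> simp
    _ ≤ α / n * n := mul_le_mul_of_nonneg_left hcompound (by positivity)
    _ ≤ α := by
        rcases n.eq_zero_or_pos with rfl | hn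
        · simpa using hα.le
        · rw [div_mul_cancel₀ _ (by positivity)]
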